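/- arXiv:2404.18482 — 2 statements merged into one kernel-verified Lean document; each statement's English description precedes it below -/
import Mathlib

section
/- Let n ≥ 2 and suppose c_{m,j} (m ≥ 0, 0 ≤ j ≤ 2m, with c_{m,j} := 0 for j outside this range) satisfy c_{0,0} = 1 and the recurrence c_{m+1,j} = −λ² c_{m,j−2} + iλ(n−j) c_{m,j−1} + (1 + λ² − j(j−1)) c_{m,j} + (−iλ(j+1) + j(j+1)) c_{m,j+1}, where λ ≥ 1. Then there is a constant C depending only on n (any C with C² ≥ 2(n+2) works) such that |c_{m,j}| ≤ C^{2m+1} (2m)! λ^{2m} for all m and j. -/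
/-!
Induct on `m` with the hypothesis `‖c m j‖ ≤ C^(2m+1) (2m)! λ^(2m)` for all `j`. Since row `m` is
supported on `0 ≤ j ≤ 2m`, only those `j` matter when bounding the four coefficients of the
recurrence, and there (using `λ ≥ 1`) their absolute values add up to at most
`λ² (n + 4 + 4m + 8m²) ≤ 2(n+2) λ² (2m+2)(2m+1) ≤ C² λ² (2m+2)(2m+1)`,
which is exactly the ratio of the bounds for rows `m + 1` and `m`.
-/

open Complex

noncomputable def nextRow (n : ℕ) (lam : ℝ) (f : ℤ → ℂ) (j : ℤ) : ℂ :=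
  -(lam : ℂ) ^ 2 * f (j - 2)
    + I * (lam : ℂ) * ((n : ℂ) - (j : ℂ)) * f (j - 1)
    + (1 + (lam : ℂ) ^ 2 - (j : ℂ) * ((j : ℂ) - 1)) * f j
    + (-I * (lam : ℂ) * ((j : ℂ) + 1) + (j : ℂ) * ((j : ℂ) + 1)) * f (j + 1)

lemma norm_mul_le_of_ne_zero {α : Type*} [NonUnitalSeminormedRing α] {a z : α} {K B : ℝ}
    (hK : 0 ≤ K) (hz : ‖z‖ ≤ B) (ha : z ≠ 0 → ‖a‖ ≤ K) : ‖a * z‖ ≤ K * B := by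
  rcases eq_or_ne z 0 with rfl | hz0
  · simpa using mul_nonneg hK ((norm_nonneg _).trans hz)
  · exact (norm_mul_le a z).trans (mul_le_mul (ha hz0) hz (norm_nonneg _) hK)

lemma int_mul_sub_one_nonneg (j : ℤ) : (0 : ℝ) ≤ j * (j - 1) := by
  have : (0 : ℤ) ≤ j * (j - 1) := by
    rcases le_or_gt j 0 with h | h <;> nlinarith
  exact_mod_cast this

lemma norm_I_mul_mul_sub_le {lam : ℝ} (hlam : 0 ≤ lam) (n m : ℕ) {j : ℤ} (h1 : 1 ≤ j)
    (h2 : j ≤ 2 * m + 1) : ‖I * (lam : ℂ) * ((n : ℂ) - (j : ℂ))‖ ≤ lam * (n + 2 * m + 1) := by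
  have hj1 : (1 : ℝ) ≤ j := by exact_mod_cast h1
  have hj2 : (j : ℝ) ≤ 2 * m + 1 := by exact_mod_cast h2
  have hn : (0 : ℝ) ≤ n := n.cast_nonneg
  have hcast : I * (lam : ℂ) * ((n : ℂ) - (j : ℂ)) = ((lam * (n - j) : ℝ) : ℂ) * I := by
    push_cast; ring
  rw [hcast, norm_mul, norm_I, mul_one, norm_real, Real.norm_eq_abs, abs_mul,
    abs_of_nonneg hlam]
  exact mul_le_mul_of_nonneg_left (abs_le.mpr ⟨by linarith, by linarith⟩) hlam

lemma norm_diag_coeff_le (lam : ℝ) (m : ℕ) {j : ℤ} (h0 : 0 ≤ j) (h1 : j ≤ 2 * m) :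
    ‖1 + (lam : ℂ) ^ 2 - (j : ℂ) * ((j : ℂ) - 1)‖ ≤ 1 + lam ^ 2 + 4 * m ^ 2 := by
  have hj0 : (0 : ℝ) ≤ j := by exact_mod_cast h0
  have hj1 : (j : ℝ) ≤ 2 * m := by exact_mod_cast h1
  have hjj := int_mul_sub_one_nonneg j
  have hcast : 1 + (lam : ℂ) ^ 2 - (j : ℂ) * ((j : ℂ) - 1)
      = ((1 + lam ^ 2 - j * (j - 1) : ℝ) : ℂ) := by push_cast; ring
  rw [hcast, norm_real, Real.norm_eq_abs, abs_le]
  constructor <;> nlinarith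

lemma norm_super_coeff_le {lam : ℝ} (hlam : 0 ≤ lam) (m : ℕ) {j : ℤ} (h0 : 0 ≤ j + 1)
    (h1 : j + 1 ≤ 2 * m) :
    ‖-I * (lam : ℂ) * ((j : ℂ) + 1) + (j : ℂ) * ((j : ℂ) + 1)‖ ≤ lam * (2 * m) + 4 * m ^ 2 := by
  have hj0 : (0 : ℝ) ≤ j + 1 := by exact_mod_cast h0
  have hj1 : (j : ℝ) + 1 ≤ 2 * m := by exact_mod_cast h1
  have hjj : (0 : ℝ) ≤ j * (j + 1) := by
    simpa [mul_comm] using int_mul_sub_one_nonneg (j + 1)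
  have hcast : -I * (lam : ℂ) * ((j : ℂ) + 1) + (j : ℂ) * ((j : ℂ) + 1)
      = ((j * (j + 1) : ℝ) : ℂ) + ((-(lam * (j + 1)) : ℝ) : ℂ) * I := by push_cast; ring
  rw [hcast]
  refine (norm_add_le _ _).trans ?_
  rw [norm_mul, norm_I, mul_one, norm_real, norm_real, Real.norm_eq_abs, Real.norm_eq_abs,
    abs_of_nonneg hjj, abs_neg, abs_mul, abs_of_nonneg hlam, abs_of_nonneg hj0]
  nlinarith

theorem norm_nextRow_le (n m : ℕ) {lam : ℝ} (hlam : 1 ≤ lam) {f : ℤ → ℂ} {B : ℝ}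
    (hsupp : ∀ j, f j ≠ 0 → 0 ≤ j ∧ j ≤ 2 * m) (hB : ∀ j, ‖f j‖ ≤ B) (j : ℤ) :
    ‖nextRow n lam f j‖ ≤ lam ^ 2 * (n + 4 + 4 * m + 8 * m ^ 2) * B := by
  have hlam0 : 0 ≤ lam := by linarith
  have hb1 : ‖-(lam : ℂ) ^ 2 * f (j - 2)‖ ≤ lam ^ 2 * B :=
    norm_mul_le_of_ne_zero (by positivity) (hB _) fun _ => by
      rw [norm_neg, norm_pow, norm_real, Real.norm_eq_abs, abs_of_nonneg hlam0]
  have hb2 : ‖I * (lam : ℂ) * ((n : ℂ) - (j : ℂ)) * f (j - 1)‖ ≤ lam * (n + 2 * m + 1) * B :=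
    norm_mul_le_of_ne_zero (by positivity) (hB _) fun h => by
      obtain ⟨h0, h1⟩ := hsupp _ h
      exact norm_I_mul_mul_sub_le hlam0 n m (by omega) (by omega)
  have hb3 : ‖(1 + (lam : ℂ) ^ 2 - (j : ℂ) * ((j : ℂ) - 1)) * f j‖
      ≤ (1 + lam ^ 2 + 4 * m ^ 2) * B :=
    norm_mul_le_of_ne_zero (by positivity) (hB _) fun h =>
      norm_diag_coeff_le lam m (hsupp _ h).1 (hsupp _ h).2
  have hb4 : ‖(-I * (lam : ℂ) * ((j : ℂ) + 1) + (j : ℂ) * ((j : ℂ) + 1)) * f (j + 1)‖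
      ≤ (lam * (2 * m) + 4 * m ^ 2) * B :=
    norm_mul_le_of_ne_zero (by positivity) (hB _) fun h =>
      norm_super_coeff_le hlam0 m (hsupp _ h).1 (hsupp _ h).2
  have hB0 : 0 ≤ B := (norm_nonneg _).trans (hB 0)
  have hcoeff : lam ^ 2 + lam * (n + 2 * m + 1) + (1 + lam ^ 2 + 4 * m ^ 2)
      + (lam * (2 * m) + 4 * m ^ 2) ≤ lam ^ 2 * (n + 4 + 4 * m + 8 * m ^ 2) := by
    have hlam_sq : lam ≤ lam ^ 2 := by nlinarith
    nlinarith [mul_le_mul_of_nonneg_right hlam_sq (by positivity : (0 : ℝ) ≤ n + 4 * m + 1)]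
  calc ‖nextRow n lam f j‖
      ≤ lam ^ 2 * B + lam * (n + 2 * m + 1) * B + (1 + lam ^ 2 + 4 * m ^ 2) * B
          + (lam * (2 * m) + 4 * m ^ 2) * B := by
        unfold nextRow
        refine (norm_add_le _ _).trans (add_le_add ?_ hb4)
        refine (norm_add_le _ _).trans (add_le_add ?_ hb3)
        exact (norm_add_le _ _).trans (add_le_add hb1 hb2)
    _ ≤ lam ^ 2 * (n + 4 + 4 * m + 8 * m ^ 2) * B := by
        nlinarith [mul_le_mul_of_nonneg_right hcoeff hB0]

lemma pow_mul_factorial_mul_pow_succ (C lam : ℝ) (m : ℕ) :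
    C ^ (2 * (m + 1) + 1) * ((2 * (m + 1)).factorial : ℝ) * lam ^ (2 * (m + 1))
      = C ^ 2 * lam ^ 2 * ((2 * m + 2) * (2 * m + 1))
        * (C ^ (2 * m + 1) * ((2 * m).factorial : ℝ) * lam ^ (2 * m)) := by
  rw [show 2 * (m + 1) = 2 * m + 1 + 1 by ring, Nat.factorial_succ, Nat.factorial_succ]
  push_cast
  ring

lemma coeff_sum_le_factorial_ratio (n m : ℕ) : (n : ℝ) + 4 + 4 * m + 8 * m ^ 2
    ≤ 2 * (n + 2) * ((2 * m + 2) * (2 * m + 1)) := by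
  nlinarith [(by positivity : (0 : ℝ) ≤ n * m), (by positivity : (0 : ℝ) ≤ n * m ^ 2)]

theorem stmt_8_general (n : ℕ) (lam : ℝ) (hlam : 1 ≤ lam)
    (c : ℕ → ℤ → ℂ)
    (h00 : c 0 0 = 1)
    (hzero : ∀ (m : ℕ) (j : ℤ), (j < 0 ∨ (2 * m : ℤ) < j) → c m j = 0)
    (hrec : ∀ (m : ℕ) (j : ℤ),
      c (m + 1) j
        = -(lam : ℂ) ^ 2 * c m (j - 2)
          + Complex.I * (lam : ℂ) * ((n : ℂ) - (j : ℂ)) * c m (j - 1)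
          + (1 + (lam : ℂ) ^ 2 - (j : ℂ) * ((j : ℂ) - 1)) * c m j
          + (-Complex.I * (lam : ℂ) * ((j : ℂ) + 1) + (j : ℂ) * ((j : ℂ) + 1)) * c m (j + 1)) :
    ∀ C : ℝ, Real.sqrt (2 * (n + 2)) ≤ C →
      ∀ (m : ℕ) (j : ℤ), ‖c m j‖ ≤ C ^ (2 * m + 1) * (2 * m).factorial * lam ^ (2 * m) := by
  intro C hC m
  obtain ⟨hC0, hCsq⟩ := Real.sqrt_le_iff.mp hC
  induction m with
  | zero =>
    intro j
    rcases eq_or_ne j 0 with rfl | hj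
    · simpa [h00] using (by nlinarith : (1 : ℝ) ≤ C)
    · simpa [hzero 0 j (by omega)] using hC0
  | succ m ih =>
    intro j
    have hsupp : ∀ j, c m j ≠ 0 → 0 ≤ j ∧ j ≤ 2 * m := fun j h => by
      by_contra hj
      exact h (hzero m j (by omega))
    rw [pow_mul_factorial_mul_pow_succ, hrec m j]
    refine (norm_nextRow_le n m hlam hsupp ih j).trans (mul_le_mul_of_nonneg_right ?_ ?_)
    · nlinarith [coeff_sum_le_factorial_ratio n m, mul_le_mul_of_nonneg_right hCsq
        (by positivity : (0 : ℝ) ≤ lam ^ 2 * ((2 * m + 2) * (2 * m + 1)))]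
    · positivity

/-- Let `n ≥ 2`, `λ ≥ 1`, and let `c_{m,j}` (extended by zero outside
`0 ≤ j ≤ 2m`) satisfy `c_{0,0} = 1` and the recurrence
`c_{m+1,j} = −λ² c_{m,j−2} + iλ(n−j) c_{m,j−1} + (1+λ²−j(j−1)) c_{m,j}
+ (−iλ(j+1)+j(j+1)) c_{m,j+1}`. Then for any `C` with `C² ≥ 2(n+2)`
(i.e. `√(2(n+2)) ≤ C`) one has `|c_{m,j}| ≤ C^{2m+1} (2m)! λ^{2m}` for all m, j. -/
theorem stmt_8 (n : ℕ) (hn : 2 ≤ n) (lam : ℝ) (hlam : 1 ≤ lam)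
    (c : ℕ → ℤ → ℂ)
    (h00 : c 0 0 = 1)
    (hzero : ∀ (m : ℕ) (j : ℤ), (j < 0 ∨ (2 * m : ℤ) < j) → c m j = 0)
    (hrec : ∀ (m : ℕ) (j : ℤ),
      c (m + 1) j
        = -(lam : ℂ) ^ 2 * c m (j - 2)
          + Complex.I * (lam : ℂ) * ((n : ℂ) - (j : ℂ)) * c m (j - 1)
          + (1 + (lam : ℂ) ^ 2 - (j : ℂ) * ((j : ℂ) - 1)) * c m j
          + (-Complex.I * (lam : ℂ) * ((j : ℂ) + 1) + (j : ℂ) * ((j : ℂ) + 1)) * c m (j + 1)) :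
    ∀ C : ℝ, Real.sqrt (2 * (n + 2)) ≤ C →
      ∀ (m : ℕ) (j : ℤ), ‖c m j‖ ≤ C ^ (2 * m + 1) * (2 * m).factorial * lam ^ (2 * m) :=
  stmt_8_general n lam hlam c h00 hzero hrec
end

section
/- Let X, Y be Hilbert spaces, T : X → Y a compact injective linear operator with singular values σ₁ ≥ σ₂ ≥ … and let (φ_j) be an orthonormal basis of X. Fix γ₀ ≥ 1 and suppose σ_j(T) ≤ min{h₁, h₂ exp(−μ j^β)} for all j, with h₁, h₂, μ, β > 0. If ω : ℝ₊ → ℝ₊ is non-decreasing and ‖f‖_X ≤ ω(‖Tf‖_Y) for all f with Σ_j j^{2γ₀} |⟨f, φ_j⟩|² ≤ 1, then for all 0 < t < min{h₁ 2^{−γ₀}, h₂ e^{−μ}} one has ω(t) ≥ max{ h₁^{−1} t , 2^{−γ₀} μ^{γ₀/β} (log h₂ + log(1/t))^{−γ₀/β} }. -/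
/-!
The min-max test function `f ∈ span {φ j | j < N}` with `‖f‖ = ε` has
`∑ (j + 1) ^ (2γ₀) ⟪f, φ j⟫² ≤ N ^ (2γ₀) ε²`, so it lies in the stability class as soon as
`ε ≤ N ^ (-γ₀)`, and then `ε ≤ ω ‖T f‖ ≤ ω (σ N ε)`. The choice `N = 1`, `ε = t / h₁` gives the
first bound. For the second, `N = ⌈(L / μ) ^ (1 / β)⌉` with `L = log (h₂ / t)` makes
`σ N ≤ h₂ exp (-μ N ^ β) ≤ t`, while `N ≤ 2 (L / μ) ^ (1 / β)` keeps `ε = (2 (L / μ) ^ (1 / β)) ^ (-γ₀)`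
below `N ^ (-γ₀)`.
-/

open scoped RealInnerProductSpace

theorem Orthonormal.inner_eq_zero_of_mem_span_image {ι 𝕜 E : Type*} [RCLike 𝕜]
    [NormedAddCommGroup E] [InnerProductSpace 𝕜 E] {v : ι → E} (hv : Orthonormal 𝕜 v)
    {s : Set ι} {x : E} (hx : x ∈ Submodule.span 𝕜 (v '' s)) {j : ι} (hj : j ∉ s) :
    inner 𝕜 x (v j) = 0 := by
  refine Submodule.mem_orthogonal_singleton_iff_inner_left.mp (Submodule.span_le.mpr ?_ hx)
  rintro _ ⟨i, hi, rfl⟩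
  exact Submodule.mem_orthogonal_singleton_iff_inner_left.mpr
    (hv.inner_eq_zero fun hij => hj (hij ▸ hi))

theorem HilbertBasis.sum_range_inner_sq_of_inner_eq_zero {X : Type*} [NormedAddCommGroup X]
    [InnerProductSpace ℝ X] (φ : HilbertBasis ℕ ℝ X) {f : X} {N : ℕ}
    (hf : ∀ j, N ≤ j → ⟪f, φ j⟫ = 0) : ∑ j ∈ Finset.range N, ⟪f, φ j⟫ ^ 2 = ‖f‖ ^ 2 := by
  rw [← real_inner_self_eq_norm_sq, ← φ.tsum_inner_mul_inner f f,
    tsum_eq_sum (s := Finset.range N) fun j hj => by rw [hf j (by simpa using hj), zero_mul]]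
  exact Finset.sum_congr rfl fun j _ => by rw [real_inner_comm f (φ j), sq]

theorem HilbertBasis.tsum_weighted_inner_sq_le {X : Type*} [NormedAddCommGroup X]
    [InnerProductSpace ℝ X] (φ : HilbertBasis ℕ ℝ X) {f : X} {N : ℕ} {γ : ℝ} (hγ : 0 ≤ γ)
    (hf : ∀ j, N ≤ j → ⟪f, φ j⟫ = 0) :
    ∑' j : ℕ, ((j : ℝ) + 1) ^ (2 * γ) * ⟪f, φ j⟫ ^ 2 ≤ (N : ℝ) ^ (2 * γ) * ‖f‖ ^ 2 := by
  rw [tsum_eq_sum (s := Finset.range N) fun j hj => by rw [hf j (by simpa using hj)]; ring,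
    ← φ.sum_range_inner_sq_of_inner_eq_zero hf, Finset.mul_sum]
  refine Finset.sum_le_sum fun j hj => mul_le_mul_of_nonneg_right ?_ (sq_nonneg _)
  have hjN : (j : ℝ) + 1 ≤ N := by exact_mod_cast Finset.mem_range.mp hj
  exact Real.rpow_le_rpow (by positivity) hjN (by positivity)

theorem rpow_two_mul_mul_sq_le_one {N ε γ : ℝ} (hN : 0 < N) (hε : 0 ≤ ε) (hεN : ε ≤ N ^ (-γ)) :
    N ^ (2 * γ) * ε ^ 2 ≤ 1 := by
  have hNε : N ^ γ * ε ≤ 1 := by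
    calc N ^ γ * ε ≤ N ^ γ * N ^ (-γ) := by gcongr
      _ = 1 := by rw [← Real.rpow_add hN, add_neg_cancel, Real.rpow_zero]
  calc N ^ (2 * γ) * ε ^ 2 = (N ^ γ * ε) ^ 2 := by
        rw [mul_pow, ← Real.rpow_mul_natCast hN.le]; norm_num [mul_comm]
    _ ≤ 1 := pow_le_one₀ (by positivity) hNε

theorem rpow_neg_two_mul_rpow_div {γ μ β L : ℝ} (hμ : 0 < μ) (hL : 0 < L) :
    (2 : ℝ) ^ (-γ) * μ ^ (γ / β) * L ^ (-(γ / β)) = (2 * (L / μ) ^ β⁻¹) ^ (-γ) := by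
  rw [Real.mul_rpow zero_le_two (by positivity), ← Real.rpow_mul (by positivity),
    Real.div_rpow hL.le hμ.le, show β⁻¹ * -γ = -(γ / β) by ring, Real.rpow_neg hμ.le,
    div_inv_eq_mul]
  ring

theorem mul_exp_neg_log_add_log_one_div {h t : ℝ} (hh : 0 < h) (ht : 0 < t) :
    h * Real.exp (-(Real.log h + Real.log (1 / t))) = t := by
  rw [Real.exp_neg, Real.exp_add, Real.exp_log hh, Real.exp_log (by positivity)]
  field_simp

theorem lt_log_add_log_one_div {μ h t : ℝ} (hh : 0 < h) (ht : 0 < t)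
    (htμ : t < h * Real.exp (-μ)) : μ < Real.log h + Real.log (1 / t) := by
  rwa [← neg_lt_neg_iff, ← Real.exp_lt_exp, ← mul_lt_mul_iff_right₀ hh,
    mul_exp_neg_log_add_log_one_div hh ht]

theorem exists_nat_exp_neg_mul_rpow_le {μ β γ L : ℝ} (hμ : 0 < μ) (hβ : 0 < β) (hγ : 0 ≤ γ)
    (hμL : μ ≤ L) :
    ∃ N : ℕ, 1 ≤ N ∧ Real.exp (-μ * (N : ℝ) ^ β) ≤ Real.exp (-L) ∧
      (2 : ℝ) ^ (-γ) * μ ^ (γ / β) * L ^ (-(γ / β)) ≤ (N : ℝ) ^ (-γ) := by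
  have hL : 0 < L := hμ.trans_le hμL
  set A := (L / μ) ^ β⁻¹
  have hA : 1 ≤ A := Real.one_le_rpow ((one_le_div hμ).mpr hμL) (by positivity)
  refine ⟨⌈A⌉₊, Nat.one_le_ceil_iff.mpr (by positivity), ?_, ?_⟩
  · rw [Real.exp_le_exp, neg_mul, neg_le_neg_iff]
    calc L = μ * A ^ β := by
          rw [← Real.rpow_mul (by positivity), inv_mul_cancel₀ hβ.ne', Real.rpow_one]
          field_simp
      _ ≤ μ * (⌈A⌉₊ : ℝ) ^ β := by gcongr; exact Nat.le_ceil A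
  · rw [rpow_neg_two_mul_rpow_div hμ hL]
    exact Real.rpow_le_rpow_of_nonpos (by positivity) (Nat.ceil_le_two_mul (by linarith))
      (neg_nonpos.mpr hγ)

theorem le_modulus_of_le_rpow_neg_of_mul_le {X Y : Type*}
    [NormedAddCommGroup X] [InnerProductSpace ℝ X] [NormedAddCommGroup Y] [NormedSpace ℝ Y]
    (T : X →L[ℝ] Y) (φ : HilbertBasis ℕ ℝ X) (σ : ℕ → ℝ) {γ₀ : ℝ} (hγ : 0 ≤ γ₀)
    (hspec : ∀ N : ℕ, 1 ≤ N → ∀ ε : ℝ, 0 < ε →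
      ∃ f : X, f ∈ Submodule.span ℝ ((fun j => φ j) '' {j : ℕ | j < N}) ∧ ‖f‖ = ε ∧ ‖T f‖ ≤ σ N * ε)
    (ω : ℝ → ℝ) (hω : ∀ s t : ℝ, 0 ≤ s → s ≤ t → ω s ≤ ω t)
    (hstab : ∀ f : X,
      (∑' j : ℕ, ((j : ℝ) + 1) ^ (2 * γ₀) * ⟪f, φ j⟫ ^ 2) ≤ 1 → ‖f‖ ≤ ω ‖T f‖)
    (N : ℕ) (hN : 1 ≤ N) (ε : ℝ) {t : ℝ} (hε : 0 < ε) (hεN : ε ≤ (N : ℝ) ^ (-γ₀))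
    (hσε : σ N * ε ≤ t) : ε ≤ ω t := by
  obtain ⟨f, hf_span, hf_norm, hTf⟩ := hspec N hN ε hε
  have hf_coeff : ∀ j, N ≤ j → ⟪f, φ j⟫ = 0 := fun j hj =>
    φ.orthonormal.inner_eq_zero_of_mem_span_image hf_span (not_lt.mpr hj)
  have hf_smooth : ∑' j : ℕ, ((j : ℝ) + 1) ^ (2 * γ₀) * ⟪f, φ j⟫ ^ 2 ≤ 1 := by
    refine (φ.tsum_weighted_inner_sq_le hγ hf_coeff).trans ?_
    rw [hf_norm]
    exact rpow_two_mul_mul_sq_le_one (by exact_mod_cast hN) hε.le hεN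
  calc ε = ‖f‖ := hf_norm.symm
    _ ≤ ω ‖T f‖ := hstab f hf_smooth
    _ ≤ ω t := hω _ _ (norm_nonneg _) (hTf.trans hσε)

theorem stmt_9_general {X Y : Type*}
    [NormedAddCommGroup X] [InnerProductSpace ℝ X]
    [NormedAddCommGroup Y] [InnerProductSpace ℝ Y]
    (T : X →L[ℝ] Y)
    (φ : HilbertBasis ℕ ℝ X)
    (σ : ℕ → ℝ)
    (γ₀ h₁ h₂ μ β : ℝ) (hγ : 1 ≤ γ₀) (hh₁ : 0 < h₁) (hh₂ : 0 < h₂)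
    (hμ : 0 < μ) (hβ : 0 < β)
    (hσb : ∀ j : ℕ, 1 ≤ j → σ j ≤ min h₁ (h₂ * Real.exp (-μ * (j : ℝ) ^ β)))
    (hspec : ∀ N : ℕ, 1 ≤ N → ∀ ε : ℝ, 0 < ε →
      ∃ f : X, f ∈ Submodule.span ℝ ((fun j => φ j) '' {j : ℕ | j < N}) ∧ ‖f‖ = ε ∧ ‖T f‖ ≤ σ N * ε)
    (ω : ℝ → ℝ) (hω : ∀ s t : ℝ, 0 ≤ s → s ≤ t → ω s ≤ ω t)
    (hstab : ∀ f : X,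
      (∑' j : ℕ, ((j : ℝ) + 1) ^ (2 * γ₀) * ⟪f, φ j⟫ ^ 2) ≤ 1 → ‖f‖ ≤ ω ‖T f‖) :
    ∀ t : ℝ, 0 < t → t < min (h₁ * 2 ^ (-γ₀)) (h₂ * Real.exp (-μ)) →
      max (h₁⁻¹ * t)
          ((2 : ℝ) ^ (-γ₀) * μ ^ (γ₀ / β) *
            (Real.log h₂ + Real.log (1 / t)) ^ (-(γ₀ / β)))
        ≤ ω t := by
  intro t ht htlt
  have hγ' : 0 ≤ γ₀ := zero_le_one.trans hγ
  have key := le_modulus_of_le_rpow_neg_of_mul_le T φ σ hγ' hspec ω hω hstab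
  refine max_le ?_ ?_
  · have ht₁ : t ≤ h₁ := htlt.le.trans <| (min_le_left _ _).trans <|
      mul_le_of_le_one_right hh₁.le (Real.rpow_le_one_of_one_le_of_nonpos one_le_two (by linarith))
    refine key 1 le_rfl _ (by positivity) ?_ ?_
    · rwa [Nat.cast_one, Real.one_rpow, inv_mul_le_iff₀ hh₁, mul_one]
    · calc σ 1 * (h₁⁻¹ * t) ≤ h₁ * (h₁⁻¹ * t) := by
            gcongr
            exact (hσb 1 le_rfl).trans (min_le_left _ _)
        _ = t := by field_simp
  · set L := Real.log h₂ + Real.log (1 / t)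
    have hμL : μ < L := lt_log_add_log_one_div hh₂ ht (htlt.trans_le (min_le_right _ _))
    have hL : 0 < L := hμ.trans hμL
    obtain ⟨N, hN, hNL, hεN⟩ := exists_nat_exp_neg_mul_rpow_le hμ hβ hγ' hμL.le
    have hσN : σ N ≤ t := calc
      σ N ≤ h₂ * Real.exp (-μ * (N : ℝ) ^ β) := (hσb N hN).trans (min_le_right _ _)
      _ ≤ h₂ * Real.exp (-L) := by gcongr
      _ = t := mul_exp_neg_log_add_log_one_div hh₂ ht
    have hε₁ : (N : ℝ) ^ (-γ₀) ≤ 1 :=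
      Real.rpow_le_one_of_one_le_of_nonpos (by exact_mod_cast hN) (by linarith)
    refine key N hN _ (by positivity) hεN ?_
    calc σ N * _ ≤ t * 1 := mul_le_mul hσN (hεN.trans hε₁) (by positivity) ht.le
      _ = t := mul_one t

/-- Abstract instability lemma. `T : X → Y` is a compact injective linear operator
between Hilbert spaces with singular values `σ₁ ≥ σ₂ ≥ ⋯` (`σ N` is the `N`-th
singular value for `N ≥ 1`, and `φ j` represents the basis vector `φ_{j+1}`). The Courant min-max input is:
for every `N ≥ 1` and `ε > 0` there is `f ∈ span{φ₁,…,φ_N}` with `‖f‖ = ε` and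
`‖Tf‖ ≤ σ_N ε`.  If `σ_j ≤ min{h₁, h₂ e^{−μ j^β}}` and `‖f‖ ≤ ω(‖Tf‖)` whenever
`Σ_j j^{2γ₀}|⟨f,φ_j⟩|² ≤ 1`, then for `0 < t < min{h₁2^{−γ₀}, h₂e^{−μ}}`,
`ω(t) ≥ max{h₁⁻¹ t, 2^{−γ₀} μ^{γ₀/β} (log h₂ + log(1/t))^{−γ₀/β}}`. -/
theorem stmt_9 {X Y : Type*}
    [NormedAddCommGroup X] [InnerProductSpace ℝ X] [CompleteSpace X]
    [NormedAddCommGroup Y] [InnerProductSpace ℝ Y] [CompleteSpace Y]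
    (T : X →L[ℝ] Y) (hinj : Function.Injective T) (hcomp : IsCompactOperator T)
    (φ : HilbertBasis ℕ ℝ X)
    (σ : ℕ → ℝ) (hσmono : ∀ j k : ℕ, 1 ≤ j → j ≤ k → σ k ≤ σ j)
    (γ₀ h₁ h₂ μ β : ℝ) (hγ : 1 ≤ γ₀) (hh₁ : 0 < h₁) (hh₂ : 0 < h₂)
    (hμ : 0 < μ) (hβ : 0 < β)
    (hσb : ∀ j : ℕ, 1 ≤ j → σ j ≤ min h₁ (h₂ * Real.exp (-μ * (j : ℝ) ^ β)))
    (hspec : ∀ N : ℕ, 1 ≤ N → ∀ ε : ℝ, 0 < ε →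
      ∃ f : X, f ∈ Submodule.span ℝ ((fun j => φ j) '' {j : ℕ | j < N}) ∧ ‖f‖ = ε ∧ ‖T f‖ ≤ σ N * ε)
    (ω : ℝ → ℝ) (hω : ∀ s t : ℝ, 0 ≤ s → s ≤ t → ω s ≤ ω t)
    (hstab : ∀ f : X,
      (∑' j : ℕ, ((j : ℝ) + 1) ^ (2 * γ₀) * ⟪f, φ j⟫ ^ 2) ≤ 1 → ‖f‖ ≤ ω ‖T f‖) :
    ∀ t : ℝ, 0 < t → t < min (h₁ * 2 ^ (-γ₀)) (h₂ * Real.exp (-μ)) →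
      max (h₁⁻¹ * t)
          ((2 : ℝ) ^ (-γ₀) * μ ^ (γ₀ / β) *
            (Real.log h₂ + Real.log (1 / t)) ^ (-(γ₀ / β)))
        ≤ ω t :=
  stmt_9_general T φ σ γ₀ h₁ h₂ μ β hγ hh₁ hh₂ hμ hβ hσb hspec ω hω hstab
end
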